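/- arXiv:0809.1983 — 2 statements merged into one kernel-verified Lean document; each statement's English description precedes it below -/
import Mathlib

section
/- Let K and L be star bodies in ℝ^n with radial functions ρ(K,·), ρ(L,·) > 0 continuous on S^{n−1}, and p ≥ 1. Define the L_p harmonic radial sum K +̃_p L by ρ(K +̃_p L, ·)^{−p} = ρ(K,·)^{−p} + ρ(L,·)^{−p}. Then V(K +̃_p L)^{−p/n} ≥ V(K)^{−p/n} + V(L)^{−p/n}, with equality if and only if K and L are dilates. -/
/-!
Let `M = K +̃_p L`, so that `ρ_M^{-p} = ρ_K^{-p} + ρ_L^{-p}`. Writing `ρ_M^n = ρ_M^{n+p} ρ_M^{-p}`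
splits `V(M) = Ṽ_{-p}(M, K) + Ṽ_{-p}(M, L)`, where `Ṽ_{-p}(M, K) = (1/n) ∫ ρ_M^{n+p} ρ_K^{-p}` is
the dual mixed volume. Hölder's inequality with exponents `(n+p)/n` and `(n+p)/p` gives
`Ṽ_{-p}(M, K) ≥ V(M)^{(n+p)/n} V(K)^{-p/n}`, with equality iff `M` and `K` are dilates. Adding the
two bounds and dividing by `V(M)^{(n+p)/n}` gives the inequality; equality forces `M` to be a
dilate of both `K` and `L`, hence `K` a dilate of `L`.

Hölder's inequality and its equality case come from integrating the weighted AM–GM inequality for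
`f / ∫ f` and `g / ∫ g`: a continuous nonnegative function with zero integral vanishes, because
spherical measure charges every nonempty open set.
-/

open MeasureTheory Metric

noncomputable section

/-- Spherical Lebesgue measure on the unit sphere `S^(n-1) ⊂ ℝ^n`. -/
def sphereMeasure (n : ℕ) : Measure (sphere (0 : EuclideanSpace ℝ (Fin n)) 1) :=
  (volume : Measure (EuclideanSpace ℝ (Fin n))).toSphere

/-- Volume of a star body in terms of its radial function:
`V = (1/n) ∫_(S^(n-1)) ρ(u)^n du`. -/
def starVolume (n : ℕ) (ρ : sphere (0 : EuclideanSpace ℝ (Fin n)) 1 → ℝ) : ℝ :=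
  ((1 : ℝ) / n) * ∫ u, ρ u ^ (n : ℝ) ∂(sphereMeasure n)

open scoped ENNReal

namespace StarBody

section Dilates

variable {X : Type*}

def AreDilates (f g : X → ℝ) : Prop := ∃ l : ℝ, 0 < l ∧ ∀ x, f x = l * g x

variable {f g h : X → ℝ}

theorem AreDilates.symm (hfg : AreDilates f g) : AreDilates g f := by
  obtain ⟨l, hl, hfg⟩ := hfg
  exact ⟨l⁻¹, inv_pos.2 hl, fun x => by rw [hfg x, inv_mul_cancel_left₀ hl.ne']⟩

theorem AreDilates.trans (hfg : AreDilates f g) (hgh : AreDilates g h) : AreDilates f h := by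
  obtain ⟨l, hl, hfg⟩ := hfg
  obtain ⟨m, hm, hgh⟩ := hgh
  exact ⟨l * m, mul_pos hl hm, fun x => by rw [hfg x, hgh x, mul_assoc]⟩

theorem areDilates_mul_right_iff (hh : ∀ x, h x ≠ 0) :
    AreDilates (fun x => f x * h x) (fun x => g x * h x) ↔ AreDilates f g := by
  refine exists_congr fun l => and_congr_right fun _ => forall_congr' fun x => ?_
  rw [← mul_assoc, mul_left_inj' (hh x)]

theorem areDilates_rpow_iff {r : ℝ} (hr : r ≠ 0) (hf : ∀ x, 0 ≤ f x) (hg : ∀ x, 0 ≤ g x) :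
    AreDilates (fun x => f x ^ r) (fun x => g x ^ r) ↔ AreDilates f g := by
  constructor
  · rintro ⟨l, hl, hfg⟩
    refine ⟨l ^ r⁻¹, Real.rpow_pos_of_pos hl _, fun x => ?_⟩
    rw [← Real.rpow_left_inj (hf x) (mul_nonneg (by positivity) (hg x)) hr,
      Real.mul_rpow (by positivity) (hg x), Real.rpow_inv_rpow hl.le hr]
    exact hfg x
  · rintro ⟨l, hl, hfg⟩
    exact ⟨l ^ r, Real.rpow_pos_of_pos hl _, fun x => by
      simp only [hfg x, Real.mul_rpow hl.le (hg x)]⟩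

theorem areDilates_rpow_mul_rpow_neg_iff {N p : ℝ} (hNp : N + p ≠ 0) (hf : ∀ x, 0 < f x)
    (hg : ∀ x, 0 < g x) :
    AreDilates (fun x => f x ^ (N + p) * g x ^ (-p)) (fun x => g x ^ N) ↔ AreDilates f g := by
  rw [← areDilates_mul_right_iff (h := fun x => g x ^ p) fun x =>
    (Real.rpow_pos_of_pos (hg x) p).ne']
  have e₁ : (fun x => f x ^ (N + p) * g x ^ (-p) * g x ^ p) = fun x => f x ^ (N + p) :=
    funext fun x => by rw [mul_assoc, ← Real.rpow_add (hg x), neg_add_cancel, Real.rpow_zero,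
      mul_one]
  have e₂ : (fun x => g x ^ N * g x ^ p) = fun x => g x ^ (N + p) :=
    funext fun x => (Real.rpow_add (hg x) N p).symm
  rw [e₁, e₂, areDilates_rpow_iff hNp (fun x => (hf x).le) fun x => (hg x).le]

end Dilates

theorem rpow_le_rpow_mul_rpow_iff {I J S N p : ℝ} (hI : 0 < I) (hJ : 0 < J) (hS : 0 < S)
    (hN : 0 < N) (hp : 0 < p) :
    (I ≤ J ^ (N / (N + p)) * S ^ (p / (N + p)) ↔ I ^ ((N + p) / N) * S ^ (-p / N) ≤ J) ∧
    (I = J ^ (N / (N + p)) * S ^ (p / (N + p)) ↔ I ^ ((N + p) / N) * S ^ (-p / N) = J) := by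
  set Y := J ^ (N / (N + p)) * S ^ (p / (N + p))
  have hY : 0 < Y := by positivity
  have hr : 0 < (N + p) / N := by positivity
  have hYJ : Y ^ ((N + p) / N) * S ^ (-p / N) = J := by
    rw [Real.mul_rpow (by positivity) (by positivity), ← Real.rpow_mul hJ.le,
      ← Real.rpow_mul hS.le, mul_assoc, ← Real.rpow_add hS]
    have e₁ : N / (N + p) * ((N + p) / N) = 1 := by field_simp
    have e₂ : p / (N + p) * ((N + p) / N) + -p / N = 0 := by field_simp; ring
    rw [e₁, e₂, Real.rpow_one, Real.rpow_zero, mul_one]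
  rw [← hYJ, mul_le_mul_iff_left₀ (by positivity), Real.rpow_le_rpow_iff hI.le hY.le hr,
    mul_left_inj' (by positivity), Real.rpow_left_inj hI.le hY.le hr.ne']
  exact ⟨Iff.rfl, Iff.rfl⟩

theorem rpow_eq_rpow_mul_rpow_neg_rpow {a b N p : ℝ} (ha : 0 < a) (hb : 0 < b)
    (hNp : N + p ≠ 0) :
    a ^ N = (a ^ (N + p) * b ^ (-p)) ^ (N / (N + p)) * (b ^ N) ^ (1 - N / (N + p)) := by
  rw [Real.mul_rpow (by positivity) (by positivity), ← Real.rpow_mul ha.le, ← Real.rpow_mul hb.le,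
    ← Real.rpow_mul hb.le, mul_assoc, ← Real.rpow_add hb]
  have e₁ : (N + p) * (N / (N + p)) = N := by field_simp
  have e₂ : -p * (N / (N + p)) + N * (1 - N / (N + p)) = 0 := by field_simp; ring
  rw [e₁, e₂, Real.rpow_zero, mul_one]

theorem rpow_add_div_self_mul_rpow_neg_div_self {I N p : ℝ} (hI : 0 < I) (hN : N ≠ 0) :
    I ^ ((N + p) / N) * I ^ (-p / N) = I := by
  rw [← Real.rpow_add hI]
  have e : (N + p) / N + -p / N = 1 := by field_simp; ring
  rw [e, Real.rpow_one]

section RadialHarmonicSum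

variable {X : Type*} {p : ℝ} {ρ σ : X → ℝ}

/-- The radial function `ρ(K +̃_p L, ·)` of the `L_p` harmonic radial sum. -/
def radialHarmonicSum (p : ℝ) (ρ σ : X → ℝ) : X → ℝ :=
  fun x => (ρ x ^ (-p) + σ x ^ (-p)) ^ (-1 / p)

theorem radialHarmonicSum_pos (hρ : ∀ x, 0 < ρ x) (hσ : ∀ x, 0 < σ x) (x : X) :
    0 < radialHarmonicSum p ρ σ x := by
  have := hρ x; have := hσ x
  unfold radialHarmonicSum; positivity

theorem continuous_radialHarmonicSum [TopologicalSpace X] (hρc : Continuous ρ)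
    (hσc : Continuous σ) (hρ : ∀ x, 0 < ρ x) (hσ : ∀ x, 0 < σ x) :
    Continuous (radialHarmonicSum p ρ σ) := by
  have hsum : ∀ x, 0 < ρ x ^ (-p) + σ x ^ (-p) := fun x => by
    have := hρ x; have := hσ x; positivity
  exact ((hρc.rpow_const fun x => .inl (hρ x).ne').add
    (hσc.rpow_const fun x => .inl (hσ x).ne')).rpow_const fun x => .inl (hsum x).ne'

theorem radialHarmonicSum_rpow_neg (hp : p ≠ 0) (hρ : ∀ x, 0 < ρ x) (hσ : ∀ x, 0 < σ x)
    (x : X) : radialHarmonicSum p ρ σ x ^ (-p) = ρ x ^ (-p) + σ x ^ (-p) := by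
  have := hρ x; have := hσ x
  rw [radialHarmonicSum, ← Real.rpow_mul (by positivity)]
  have : -1 / p * -p = 1 := by field_simp
  rw [this, Real.rpow_one]

theorem AreDilates.radialHarmonicSum (hp : p ≠ 0) (hσ : ∀ x, 0 < σ x) (h : AreDilates ρ σ) :
    AreDilates (radialHarmonicSum p ρ σ) σ := by
  obtain ⟨l, hl, hρσ⟩ := h
  refine ⟨(l ^ (-p) + 1) ^ (-1 / p), by positivity, fun x => ?_⟩
  have := hσ x
  have e : -p * (-1 / p) = 1 := by field_simp
  rw [StarBody.radialHarmonicSum, hρσ x, Real.mul_rpow hl.le this.le, ← add_one_mul,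
    Real.mul_rpow (by positivity) (by positivity), ← Real.rpow_mul this.le, e, Real.rpow_one]

theorem areDilates_radialHarmonicSum_iff (hp : p ≠ 0) (hσ : ∀ x, 0 < σ x) :
    AreDilates (radialHarmonicSum p ρ σ) ρ ∧ AreDilates (radialHarmonicSum p ρ σ) σ ↔
      AreDilates ρ σ := by
  refine ⟨fun ⟨hρ, hσ⟩ => hρ.symm.trans hσ, fun h => ?_⟩
  have hMσ := h.radialHarmonicSum hp hσ
  exact ⟨hMσ.trans h.symm, hMσ⟩

end RadialHarmonicSum

section Normalization

variable {X : Type*} [MeasurableSpace X] {μ : Measure X} {f g : X → ℝ} {θ : ℝ}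

theorem integral_div_rpow_mul_div_rpow {F G : ℝ} (hF : 0 ≤ F) (hG : 0 ≤ G)
    (hf₀ : ∀ x, 0 ≤ f x) (hg₀ : ∀ x, 0 ≤ g x) :
    ∫ x, (f x / F) ^ θ * (g x / G) ^ (1 - θ) ∂μ =
      (∫ x, f x ^ θ * g x ^ (1 - θ) ∂μ) / (F ^ θ * G ^ (1 - θ)) := by
  simp_rw [Real.div_rpow (hf₀ _) hF, Real.div_rpow (hg₀ _) hG, div_mul_div_comm]
  exact integral_div _ _

theorem integral_convex_comb_div_integral (hf : Integrable f μ) (hg : Integrable g μ)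
    (hF : ∫ x, f x ∂μ ≠ 0) (hG : ∫ x, g x ∂μ ≠ 0) :
    ∫ x, (θ * (f x / ∫ y, f y ∂μ) + (1 - θ) * (g x / ∫ y, g y ∂μ)) ∂μ = 1 := by
  rw [integral_add ((hf.div_const _).const_mul _) ((hg.div_const _).const_mul _),
    integral_const_mul, integral_const_mul, integral_div, integral_div, div_self hF, div_self hG]
  ring

end Normalization

/-- With `N = n` and `μ` equal to `1/n` times spherical measure, this is the dual mixed volume
`Ṽ_{-p}` of the star bodies with radial functions `ρ` and `σ`. -/
def dualMixedIntegral {X : Type*} [MeasurableSpace X] (μ : Measure X) (N p : ℝ)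
    (ρ σ : X → ℝ) : ℝ :=
  ∫ x, ρ x ^ (N + p) * σ x ^ (-p) ∂μ

section CompactSpace

variable {X : Type*} [TopologicalSpace X] [CompactSpace X] [MeasurableSpace X]
  [OpensMeasurableSpace X] {μ : Measure X} [IsFiniteMeasure μ] {f g : X → ℝ} {θ : ℝ}
  {N p : ℝ} {ρ σ : X → ℝ}

theorem integrable_of_continuous (hf : Continuous f) : Integrable f μ :=
  hf.integrable_of_hasCompactSupport (.of_compactSpace f)

theorem integral_geom_mean_le_integral_arith_mean (hθ₀ : 0 ≤ θ) (hθ₁ : θ ≤ 1)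
    (hf : Continuous f) (hg : Continuous g) (hf₀ : ∀ x, 0 ≤ f x) (hg₀ : ∀ x, 0 ≤ g x) :
    ∫ x, f x ^ θ * g x ^ (1 - θ) ∂μ ≤ ∫ x, (θ * f x + (1 - θ) * g x) ∂μ :=
  integral_mono
    (integrable_of_continuous <| (hf.rpow_const fun _ => .inr hθ₀).mul
      (hg.rpow_const fun _ => .inr (sub_nonneg.2 hθ₁)))
    (integrable_of_continuous <| (continuous_const.mul hf).add (continuous_const.mul hg))
    fun x => Real.geom_mean_le_arith_mean2_weighted hθ₀ (sub_nonneg.2 hθ₁) (hf₀ x) (hg₀ x)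
      (add_sub_cancel θ 1)

theorem integral_rpow_radialHarmonicSum (hp : p ≠ 0) (hρc : Continuous ρ) (hσc : Continuous σ)
    (hρ : ∀ x, 0 < ρ x) (hσ : ∀ x, 0 < σ x) :
    ∫ x, radialHarmonicSum p ρ σ x ^ N ∂μ =
      dualMixedIntegral μ N p (radialHarmonicSum p ρ σ) ρ +
        dualMixedIntegral μ N p (radialHarmonicSum p ρ σ) σ := by
  set M := radialHarmonicSum p ρ σ
  have hM := radialHarmonicSum_pos (p := p) hρ hσ
  have hMc := continuous_radialHarmonicSum (p := p) hρc hσc hρ hσ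
  have hsplit : ∀ x, M x ^ N = M x ^ (N + p) * ρ x ^ (-p) + M x ^ (N + p) * σ x ^ (-p) :=
    fun x => by rw [← mul_add, ← radialHarmonicSum_rpow_neg hp hρ hσ, ← Real.rpow_add (hM x),
      add_neg_cancel_right]
  simp_rw [hsplit]
  exact integral_add
    (integrable_of_continuous <| (hMc.rpow_const fun x => .inl (hM x).ne').mul
      (hρc.rpow_const fun x => .inl (hρ x).ne'))
    (integrable_of_continuous <| (hMc.rpow_const fun x => .inl (hM x).ne').mul
      (hσc.rpow_const fun x => .inl (hσ x).ne'))

variable [μ.IsOpenPosMeasure]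

theorem integral_pos_of_continuous [Nonempty X] (hf : Continuous f) (hpos : ∀ x, 0 < f x) :
    0 < ∫ x, f x ∂μ :=
  integral_pos_of_integrable_nonneg_nonzero hf (integrable_of_continuous hf)
    (fun x => (hpos x).le) (hpos (Classical.arbitrary X)).ne'

theorem integral_eq_integral_iff_of_le (hf : Continuous f) (hg : Continuous g)
    (hfg : ∀ x, f x ≤ g x) : ∫ x, f x ∂μ = ∫ x, g x ∂μ ↔ f = g := by
  refine ⟨fun h => ?_, fun h => h ▸ rfl⟩
  have hzero : ∫ x, g x - f x ∂μ = 0 := by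
    rw [integral_sub (integrable_of_continuous hg) (integrable_of_continuous hf), h, sub_self]
  have hdiff : g - f = 0 := ((hg.sub hf).ae_eq_iff_eq μ continuous_zero).1 <|
    (integral_eq_zero_iff_of_nonneg (fun x => sub_nonneg.2 (hfg x))
      (integrable_of_continuous (hg.sub hf))).1 hzero
  exact (sub_eq_zero.1 hdiff).symm

theorem integral_geom_mean_eq_integral_arith_mean_iff (hθ₀ : 0 < θ) (hθ₁ : θ < 1)
    (hf : Continuous f) (hg : Continuous g) (hf₀ : ∀ x, 0 ≤ f x) (hg₀ : ∀ x, 0 ≤ g x) :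
    ∫ x, f x ^ θ * g x ^ (1 - θ) ∂μ = ∫ x, (θ * f x + (1 - θ) * g x) ∂μ ↔ f = g := by
  have hgeom : Continuous fun x => f x ^ θ * g x ^ (1 - θ) :=
    (hf.rpow_const fun _ => .inr hθ₀.le).mul (hg.rpow_const fun _ => .inr (sub_nonneg.2 hθ₁.le))
  have harith : Continuous fun x => θ * f x + (1 - θ) * g x :=
    (continuous_const.mul hf).add (continuous_const.mul hg)
  rw [integral_eq_integral_iff_of_le hgeom harith fun x =>
      Real.geom_mean_le_arith_mean2_weighted hθ₀.le (sub_nonneg.2 hθ₁.le) (hf₀ x) (hg₀ x)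
        (add_sub_cancel θ 1), funext_iff, funext_iff]
  exact forall_congr' fun x => Real.geom_mean_eq_arith_mean2_weighted_iff_of_pos hθ₀
    (sub_pos.2 hθ₁) (hf₀ x) (hg₀ x) (add_sub_cancel θ 1)

theorem areDilates_iff_div_integral_eq [Nonempty X] (hf : Continuous f) (hg : Continuous g)
    (hf₀ : ∀ x, 0 < f x) (hg₀ : ∀ x, 0 < g x) :
    AreDilates f g ↔ (fun x => f x / ∫ y, f y ∂μ) = fun x => g x / ∫ y, g y ∂μ := by
  have hF := integral_pos_of_continuous (μ := μ) hf hf₀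
  have hG := integral_pos_of_continuous (μ := μ) hg hg₀
  constructor
  · rintro ⟨l, hl, hfg⟩
    have hFG : ∫ y, f y ∂μ = l * ∫ y, g y ∂μ := by simp_rw [hfg]; exact integral_const_mul l _
    funext x
    rw [hfg x, hFG, mul_div_mul_left _ _ hl.ne']
  · intro h
    refine ⟨(∫ y, f y ∂μ) / ∫ y, g y ∂μ, div_pos hF hG, fun x => ?_⟩
    have hx := congrFun h x
    field_simp at hx ⊢
    linarith

theorem integral_rpow_mul_rpow_le [Nonempty X] (hθ₀ : 0 ≤ θ) (hθ₁ : θ ≤ 1) (hf : Continuous f)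
    (hg : Continuous g) (hf₀ : ∀ x, 0 < f x) (hg₀ : ∀ x, 0 < g x) :
    ∫ x, f x ^ θ * g x ^ (1 - θ) ∂μ ≤ (∫ x, f x ∂μ) ^ θ * (∫ x, g x ∂μ) ^ (1 - θ) := by
  have hF := integral_pos_of_continuous (μ := μ) hf hf₀
  have hG := integral_pos_of_continuous (μ := μ) hg hg₀
  have h := integral_geom_mean_le_integral_arith_mean (μ := μ) hθ₀ hθ₁
    (hf.div_const (∫ x, f x ∂μ)) (hg.div_const (∫ x, g x ∂μ))
    (fun x => div_nonneg (hf₀ x).le hF.le) (fun x => div_nonneg (hg₀ x).le hG.le)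
  rw [integral_div_rpow_mul_div_rpow hF.le hG.le (fun x => (hf₀ x).le) (fun x => (hg₀ x).le),
    integral_convex_comb_div_integral (integrable_of_continuous hf) (integrable_of_continuous hg)
      hF.ne' hG.ne'] at h
  exact (div_le_one (by positivity)).1 h

theorem integral_rpow_mul_rpow_eq_iff [Nonempty X] (hθ₀ : 0 < θ) (hθ₁ : θ < 1)
    (hf : Continuous f) (hg : Continuous g) (hf₀ : ∀ x, 0 < f x) (hg₀ : ∀ x, 0 < g x) :
    ∫ x, f x ^ θ * g x ^ (1 - θ) ∂μ = (∫ x, f x ∂μ) ^ θ * (∫ x, g x ∂μ) ^ (1 - θ) ↔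
      AreDilates f g := by
  have hF := integral_pos_of_continuous (μ := μ) hf hf₀
  have hG := integral_pos_of_continuous (μ := μ) hg hg₀
  have hnorm := integral_convex_comb_div_integral (θ := θ) (integrable_of_continuous hf)
    (integrable_of_continuous hg) hF.ne' hG.ne'
  calc _ ↔ ∫ x, (f x / ∫ y, f y ∂μ) ^ θ * (g x / ∫ y, g y ∂μ) ^ (1 - θ) ∂μ =
        ∫ x, (θ * (f x / ∫ y, f y ∂μ) + (1 - θ) * (g x / ∫ y, g y ∂μ)) ∂μ := by
        rw [hnorm, integral_div_rpow_mul_div_rpow hF.le hG.le (fun x => (hf₀ x).le)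
          (fun x => (hg₀ x).le), div_eq_one_iff_eq (by positivity)]
    _ ↔ (fun x => f x / ∫ y, f y ∂μ) = fun x => g x / ∫ y, g y ∂μ :=
        integral_geom_mean_eq_integral_arith_mean_iff hθ₀ hθ₁ (hf.div_const _) (hg.div_const _)
          (fun x => div_nonneg (hf₀ x).le hF.le) (fun x => div_nonneg (hg₀ x).le hG.le)
    _ ↔ AreDilates f g := (areDilates_iff_div_integral_eq hf hg hf₀ hg₀).symm

section DualMixed

variable [Nonempty X]

theorem integral_rpow_le_dualMixedIntegral_rpow_mul (hN : 0 < N) (hp : 0 < p)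
    (hρc : Continuous ρ) (hσc : Continuous σ) (hρ : ∀ x, 0 < ρ x) (hσ : ∀ x, 0 < σ x) :
    (∫ x, ρ x ^ N ∂μ ≤ dualMixedIntegral μ N p ρ σ ^ (N / (N + p)) *
      (∫ x, σ x ^ N ∂μ) ^ (p / (N + p))) ∧
    (∫ x, ρ x ^ N ∂μ = dualMixedIntegral μ N p ρ σ ^ (N / (N + p)) *
      (∫ x, σ x ^ N ∂μ) ^ (p / (N + p)) ↔ AreDilates ρ σ) := by
  have hNp : N + p ≠ 0 := by positivity
  have hθ₀ : 0 < N / (N + p) := by positivity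
  have hθ₁ : N / (N + p) < 1 := (div_lt_one (by positivity)).2 (by linarith)
  have hθ' : 1 - N / (N + p) = p / (N + p) := by field_simp; ring
  have hfc : Continuous fun x => ρ x ^ (N + p) * σ x ^ (-p) :=
    (hρc.rpow_const fun x => .inl (hρ x).ne').mul (hσc.rpow_const fun x => .inl (hσ x).ne')
  have hgc : Continuous fun x => σ x ^ N := hσc.rpow_const fun x => .inl (hσ x).ne'
  have hf : ∀ x, 0 < ρ x ^ (N + p) * σ x ^ (-p) := fun x => by
    have := hρ x; have := hσ x; positivity
  have hg : ∀ x, 0 < σ x ^ N := fun x => by have := hσ x; positivity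
  have hI : ∫ x, ρ x ^ N ∂μ = ∫ x, (ρ x ^ (N + p) * σ x ^ (-p)) ^ (N / (N + p)) *
      (σ x ^ N) ^ (1 - N / (N + p)) ∂μ := by
    simp_rw [← rpow_eq_rpow_mul_rpow_neg_rpow (hρ _) (hσ _) hNp]
  rw [← areDilates_rpow_mul_rpow_neg_iff hNp hρ hσ, hI, dualMixedIntegral, ← hθ']
  exact ⟨integral_rpow_mul_rpow_le hθ₀.le hθ₁.le hfc hgc hf hg,
    integral_rpow_mul_rpow_eq_iff hθ₀ hθ₁ hfc hgc hf hg⟩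

theorem integral_rpow_pos (hρc : Continuous ρ) (hρ : ∀ x, 0 < ρ x) :
    0 < ∫ x, ρ x ^ N ∂μ :=
  integral_pos_of_continuous (hρc.rpow_const fun x => .inl (hρ x).ne') fun x =>
    Real.rpow_pos_of_pos (hρ x) N

theorem dualMixedIntegral_pos (hρc : Continuous ρ) (hσc : Continuous σ) (hρ : ∀ x, 0 < ρ x)
    (hσ : ∀ x, 0 < σ x) : 0 < dualMixedIntegral μ N p ρ σ :=
  integral_pos_of_continuous
    ((hρc.rpow_const fun x => .inl (hρ x).ne').mul (hσc.rpow_const fun x => .inl (hσ x).ne'))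
    fun x => by have := hρ x; have := hσ x; positivity

theorem le_dualMixedIntegral (hN : 0 < N) (hp : 0 < p) (hρc : Continuous ρ)
    (hσc : Continuous σ) (hρ : ∀ x, 0 < ρ x) (hσ : ∀ x, 0 < σ x) :
    (∫ x, ρ x ^ N ∂μ) ^ ((N + p) / N) * (∫ x, σ x ^ N ∂μ) ^ (-p / N) ≤
      dualMixedIntegral μ N p ρ σ :=
  (rpow_le_rpow_mul_rpow_iff (integral_rpow_pos hρc hρ) (dualMixedIntegral_pos hρc hσc hρ hσ)
    (integral_rpow_pos hσc hσ) hN hp).1.1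
    (integral_rpow_le_dualMixedIntegral_rpow_mul hN hp hρc hσc hρ hσ).1

theorem rpow_mul_rpow_eq_dualMixedIntegral_iff (hN : 0 < N) (hp : 0 < p) (hρc : Continuous ρ)
    (hσc : Continuous σ) (hρ : ∀ x, 0 < ρ x) (hσ : ∀ x, 0 < σ x) :
    (∫ x, ρ x ^ N ∂μ) ^ ((N + p) / N) * (∫ x, σ x ^ N ∂μ) ^ (-p / N) =
      dualMixedIntegral μ N p ρ σ ↔ AreDilates ρ σ :=
  (rpow_le_rpow_mul_rpow_iff (integral_rpow_pos hρc hρ) (dualMixedIntegral_pos hρc hσc hρ hσ)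
    (integral_rpow_pos hσc hσ) hN hp).2.symm.trans
    (integral_rpow_le_dualMixedIntegral_rpow_mul hN hp hρc hσc hρ hσ).2

theorem rpow_integral_add_rpow_integral_le (hN : 0 < N) (hp : 0 < p) (hρc : Continuous ρ)
    (hσc : Continuous σ) (hρ : ∀ x, 0 < ρ x) (hσ : ∀ x, 0 < σ x) :
    (∫ x, ρ x ^ N ∂μ) ^ (-p / N) + (∫ x, σ x ^ N ∂μ) ^ (-p / N) ≤
      (∫ x, radialHarmonicSum p ρ σ x ^ N ∂μ) ^ (-p / N) := by
  have hM := radialHarmonicSum_pos (p := p) hρ hσ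
  have hMc := continuous_radialHarmonicSum (p := p) hρc hσc hρ hσ
  have hI := integral_rpow_pos (μ := μ) (N := N) hMc hM
  set I := ∫ x, radialHarmonicSum p ρ σ x ^ N ∂μ
  refine le_of_mul_le_mul_left ?_ (Real.rpow_pos_of_pos hI ((N + p) / N))
  calc I ^ ((N + p) / N) * ((∫ x, ρ x ^ N ∂μ) ^ (-p / N) + (∫ x, σ x ^ N ∂μ) ^ (-p / N))
      = I ^ ((N + p) / N) * (∫ x, ρ x ^ N ∂μ) ^ (-p / N) +
          I ^ ((N + p) / N) * (∫ x, σ x ^ N ∂μ) ^ (-p / N) := mul_add _ _ _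
    _ ≤ dualMixedIntegral μ N p (radialHarmonicSum p ρ σ) ρ +
          dualMixedIntegral μ N p (radialHarmonicSum p ρ σ) σ :=
        add_le_add (le_dualMixedIntegral hN hp hMc hρc hM hρ)
          (le_dualMixedIntegral hN hp hMc hσc hM hσ)
    _ = I := (integral_rpow_radialHarmonicSum hp.ne' hρc hσc hρ hσ).symm
    _ = I ^ ((N + p) / N) * I ^ (-p / N) :=
        (rpow_add_div_self_mul_rpow_neg_div_self hI hN.ne').symm

theorem rpow_integral_radialHarmonicSum_eq_iff (hN : 0 < N) (hp : 0 < p) (hρc : Continuous ρ)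
    (hσc : Continuous σ) (hρ : ∀ x, 0 < ρ x) (hσ : ∀ x, 0 < σ x) :
    (∫ x, radialHarmonicSum p ρ σ x ^ N ∂μ) ^ (-p / N) =
      (∫ x, ρ x ^ N ∂μ) ^ (-p / N) + (∫ x, σ x ^ N ∂μ) ^ (-p / N) ↔ AreDilates ρ σ := by
  have hM := radialHarmonicSum_pos (p := p) hρ hσ
  have hMc := continuous_radialHarmonicSum (p := p) hρc hσc hρ hσ
  have hI := integral_rpow_pos (μ := μ) (N := N) hMc hM
  have hsplit := rpow_add_div_self_mul_rpow_neg_div_self hI (p := p) hN.ne'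
  have hdecomp := integral_rpow_radialHarmonicSum (μ := μ) (N := N) hp.ne' hρc hσc hρ hσ
  have hK := le_dualMixedIntegral (μ := μ) hN hp hMc hρc hM hρ
  have hL := le_dualMixedIntegral (μ := μ) hN hp hMc hσc hM hσ
  rw [← areDilates_radialHarmonicSum_iff hp.ne' hσ,
    ← rpow_mul_rpow_eq_dualMixedIntegral_iff (μ := μ) hN hp hMc hρc hM hρ,
    ← rpow_mul_rpow_eq_dualMixedIntegral_iff (μ := μ) hN hp hMc hσc hM hσ]
  constructor
  · intro h
    have hsum := congrArg ((∫ x, radialHarmonicSum p ρ σ x ^ N ∂μ) ^ ((N + p) / N) * ·) h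
    simp only [hsplit, mul_add] at hsum
    constructor <;> linarith
  · rintro ⟨hK', hL'⟩
    refine mul_left_cancel₀ (Real.rpow_pos_of_pos hI ((N + p) / N)).ne' ?_
    rw [hsplit, mul_add, hK', hL', hdecomp]

end DualMixed

end CompactSpace

instance (n : ℕ) : (sphereMeasure n).IsOpenPosMeasure := by
  unfold sphereMeasure; infer_instance

instance (n : ℕ) : IsFiniteMeasure (sphereMeasure n) := by
  unfold sphereMeasure; infer_instance

theorem nonempty_sphere_of_pos {n : ℕ} (hn : 0 < n) :
    Nonempty (sphere (0 : EuclideanSpace ℝ (Fin n)) 1) :=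
  have : Nonempty (Fin n) := ⟨⟨0, hn⟩⟩
  (NormedSpace.sphere_nonempty.2 zero_le_one).to_subtype

/-- Absorbing the factor `1/n` into the measure lets the whole argument run for integrals
against any finite measure on a compact space that charges nonempty open sets. -/
theorem starVolume_eq_integral (n : ℕ) (ρ : sphere (0 : EuclideanSpace ℝ (Fin n)) 1 → ℝ) :
    starVolume n ρ = ∫ u, ρ u ^ (n : ℝ) ∂((n : ℝ≥0∞)⁻¹ • sphereMeasure n) := by
  rw [starVolume, integral_smul_measure, ENNReal.toReal_inv, ENNReal.toReal_natCast, one_div,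
    smul_eq_mul]

end StarBody

/-- Dual `L_p` Brunn–Minkowski inequality: for star bodies `K, L` (given by positive
continuous radial functions `ρK, ρL`) and `p ≥ 1`, the `L_p` harmonic radial sum
`ρ(K +̃_p L,·)^(-p) = ρK^(-p) + ρL^(-p)` satisfies
`V(K +̃_p L)^(-p/n) ≥ V(K)^(-p/n) + V(L)^(-p/n)`, with equality iff `K, L` are dilates. -/
theorem stmt10 (n : ℕ) (hn : 2 ≤ n)
    (ρK ρL : sphere (0 : EuclideanSpace ℝ (Fin n)) 1 → ℝ)
    (hKc : Continuous ρK) (hLc : Continuous ρL)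
    (hK : ∀ u, 0 < ρK u) (hL : ∀ u, 0 < ρL u) (p : ℝ) (hp : 1 ≤ p) :
    starVolume n (fun u => (ρK u ^ (-p) + ρL u ^ (-p)) ^ (-1 / p)) ^ (-p / (n : ℝ)) ≥
      starVolume n ρK ^ (-p / (n : ℝ)) + starVolume n ρL ^ (-p / (n : ℝ)) ∧
    (starVolume n (fun u => (ρK u ^ (-p) + ρL u ^ (-p)) ^ (-1 / p)) ^ (-p / (n : ℝ)) =
        starVolume n ρK ^ (-p / (n : ℝ)) + starVolume n ρL ^ (-p / (n : ℝ)) ↔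
      ∃ l : ℝ, 0 < l ∧ ∀ u, ρK u = l * ρL u) := by
  have hn₀ : 0 < n := by omega
  have hN : (0 : ℝ) < n := by exact_mod_cast hn₀
  have hp₀ : 0 < p := by linarith
  have := StarBody.nonempty_sphere_of_pos hn₀
  have := Measure.smul_finite (sphereMeasure n) (ENNReal.inv_ne_top.2 (Nat.cast_ne_zero.2 hn₀.ne'))
  have := Measure.isOpenPosMeasure_smul (sphereMeasure n)
    (ENNReal.inv_ne_zero.2 (ENNReal.natCast_ne_top n))
  simp only [StarBody.starVolume_eq_integral]
  exact ⟨StarBody.rpow_integral_add_rpow_integral_le hN hp₀ hKc hLc hK hL,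
    StarBody.rpow_integral_radialHarmonicSum_eq_iff hN hp₀ hKc hLc hK hL⟩
end
end

section
/- Let K be a convex body in ℝ^n containing the origin in its interior, with L_p surface area measure S_p(K,·) on S^{n−1}, and let L be a star body, with p > 1 and τ ∈ [−1,1]. Define Π_p^τ K by h(Π_p^τ K, u)^p = c_{n,p}(τ) ∫_{S^{n−1}} φ_τ(u⋅v)^p dS_p(K,v), and M_p^τ L by h(M_p^τ L, u)^p = c_{n,p}(τ) ∫_{S^{n−1}} φ_τ(u⋅v)^p ρ(L,v)^{n+p} dv. Then the integral identity V_p(K, M_p^τ L) = Ṽ_{−p}(L, Π_p^{τ,*} K) holds, where V_p(K,Q) = (1/n)∫ h(Q,u)^p dS_p(K,u), Ṽ_{−p}(L,Q) = (1/n)∫ ρ(L,u)^{n+p} ρ(Q,u)^{−p} du, and Π_p^{τ,*}K is the polar body of Π_p^τ K (so ρ(Π_p^{τ,*}K, ·) = h(Π_p^τ K, ·)^{−1}). -/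
/-!
Both sides equal `(c/n) ∫∫ φ_τ(u ⋅ v)^p ρ(L,v)^(n+p) dv dS_p(K,u)`: the left side by the definition
of `M_p^τ L`, the right side by Fubini (the kernel is continuous on the compact product of spheres,
and symmetric in `u, v`), the definition of `Π_p^τ K` and `ρ(Π_p^(τ,*) K,·)^(-p) = h(Π_p^τ K,·)^p`.
-/

open MeasureTheory Metric

noncomputable section

instance (n : ℕ) : IsFiniteMeasure (sphereMeasure n) := by
  unfold sphereMeasure
  infer_instance

theorem integral_integral_swap_of_continuous {X Y : Type*}
    [TopologicalSpace X] [MeasurableSpace X] [BorelSpace X] [CompactSpace X]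
    [SecondCountableTopology X]
    [TopologicalSpace Y] [MeasurableSpace Y] [BorelSpace Y] [CompactSpace Y]
    (μ : Measure X) (ν : Measure Y) [IsFiniteMeasure μ] [IsFiniteMeasure ν]
    {k : X → Y → ℝ} (hk : Continuous (Function.uncurry k)) :
    ∫ x, ∫ y, k x y ∂ν ∂μ = ∫ y, ∫ x, k x y ∂μ ∂ν :=
  integral_integral_swap (hk.integrable_of_hasCompactSupport (.of_compactSpace _))

section PhiKernel

variable {E : Type*} [NormedAddCommGroup E] [InnerProductSpace ℝ E]

/-- The kernel `φ_τ(u ⋅ v)^p` of the asymmetric `L_p` projection body, `φ_τ(t) = |t| + τ t`. -/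
def phiKernel (τ p : ℝ) (u v : E) : ℝ :=
  (|inner ℝ u v| + τ * inner ℝ u v) ^ p

theorem phiKernel_comm (τ p : ℝ) (u v : E) : phiKernel τ p u v = phiKernel τ p v u := by
  simp only [phiKernel, real_inner_comm u v]

theorem continuous_phiKernel (τ : ℝ) {p : ℝ} (hp : 0 ≤ p) :
    Continuous (Function.uncurry (phiKernel τ p : E → E → ℝ)) := by
  have hinner : Continuous fun q : E × E => inner ℝ q.1 q.2 := continuous_fst.inner continuous_snd
  exact (hinner.abs.add (continuous_const.mul hinner)).rpow_const fun _ => Or.inr hp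

end PhiKernel

theorem Real.inv_rpow_neg {x : ℝ} (hx : 0 ≤ x) (y : ℝ) : x⁻¹ ^ (-y) = x ^ y := by
  rw [Real.rpow_neg (inv_nonneg.mpr hx), Real.inv_rpow hx, inv_inv]

theorem stmt15_general (n : ℕ) (p τ cτ : ℝ) (hp : 1 < p)
    (μ : Measure (sphere (0 : EuclideanSpace ℝ (Fin n)) 1)) [IsFiniteMeasure μ]
    (ρL : sphere (0 : EuclideanSpace ℝ (Fin n)) 1 → ℝ)
    (hρc : Continuous ρL)
    (hPi hM : sphere (0 : EuclideanSpace ℝ (Fin n)) 1 → ℝ)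
    (hPipos : ∀ u, 0 < hPi u)
    (hPidef : ∀ u, hPi u ^ p = cτ * ∫ v,
      (|(inner ℝ (u : EuclideanSpace ℝ (Fin n)) (v : EuclideanSpace ℝ (Fin n)) : ℝ)| +
        τ * (inner ℝ (u : EuclideanSpace ℝ (Fin n)) (v : EuclideanSpace ℝ (Fin n)) : ℝ)) ^ p ∂μ)
    (hMdef : ∀ u, hM u ^ p = cτ * ∫ v,
      (|(inner ℝ (u : EuclideanSpace ℝ (Fin n)) (v : EuclideanSpace ℝ (Fin n)) : ℝ)| +
        τ * (inner ℝ (u : EuclideanSpace ℝ (Fin n)) (v : EuclideanSpace ℝ (Fin n)) : ℝ)) ^ p *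
        ρL v ^ ((n : ℝ) + p) ∂(sphereMeasure n)) :
    ((1 : ℝ) / n) * ∫ u, hM u ^ p ∂μ =
      ((1 : ℝ) / n) * ∫ u, ρL u ^ ((n : ℝ) + p) * ((hPi u)⁻¹) ^ (-p) ∂(sphereMeasure n) := by
  set E := EuclideanSpace ℝ (Fin n)
  have hk : Continuous fun q : sphere (0 : E) 1 × sphere (0 : E) 1 =>
      phiKernel τ p (q.1 : E) q.2 * ρL q.2 ^ ((n : ℝ) + p) :=
    ((continuous_phiKernel τ (by linarith)).comp
      (continuous_subtype_val.prodMap continuous_subtype_val)).mul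
      ((hρc.comp continuous_snd).rpow_const fun _ => Or.inr (by positivity))
  congr 1
  calc ∫ u, hM u ^ p ∂μ
      = cτ * ∫ u, ∫ v, phiKernel τ p (u : E) v * ρL v ^ ((n : ℝ) + p) ∂sphereMeasure n ∂μ := by
        simp only [hMdef]
        exact integral_const_mul _ _
    _ = cτ * ∫ v, ∫ u, phiKernel τ p (u : E) v * ρL v ^ ((n : ℝ) + p) ∂μ ∂sphereMeasure n := by
        rw [integral_integral_swap_of_continuous _ _ hk]
    _ = ∫ v, ρL v ^ ((n : ℝ) + p) * hPi v ^ p ∂sphereMeasure n := by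
        rw [← integral_const_mul]
        congr 1 with v
        have hPiv : hPi v ^ p = cτ * ∫ u, phiKernel τ p (v : E) u ∂μ := hPidef v
        simp only [phiKernel_comm τ p _ (v : E), integral_mul_const, hPiv]
        ring
    _ = ∫ v, ρL v ^ ((n : ℝ) + p) * (hPi v)⁻¹ ^ (-p) ∂sphereMeasure n := by
        simp only [Real.inv_rpow_neg (hPipos _).le]

/-- The integral identity `V_p(K, M_p^τ L) = Ṽ_(-p)(L, Π_p^(τ,*) K)`: here `μ = S_p(K,·)` is
the `L_p` surface area measure of `K`, `ρL` is the radial function of the star body `L`,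
`hPi = h(Π_p^τ K,·)` and `hM = h(M_p^τ L,·)` are given by their defining integral formulas, and
`ρ(Π_p^(τ,*)K,·) = hΠ⁻¹`. -/
theorem stmt15 (n : ℕ) (hn : 2 ≤ n) (p τ cτ : ℝ) (hp : 1 < p)
    (hτ₁ : -1 ≤ τ) (hτ₂ : τ ≤ 1) (hcτ : 0 < cτ)
    (μ : Measure (sphere (0 : EuclideanSpace ℝ (Fin n)) 1)) [IsFiniteMeasure μ]
    (ρL : sphere (0 : EuclideanSpace ℝ (Fin n)) 1 → ℝ)
    (hρc : Continuous ρL) (hρ : ∀ v, 0 < ρL v)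
    (hPi hM : sphere (0 : EuclideanSpace ℝ (Fin n)) 1 → ℝ)
    (hPipos : ∀ u, 0 < hPi u)
    (hPidef : ∀ u, hPi u ^ p = cτ * ∫ v,
      (|(inner ℝ (u : EuclideanSpace ℝ (Fin n)) (v : EuclideanSpace ℝ (Fin n)) : ℝ)| +
        τ * (inner ℝ (u : EuclideanSpace ℝ (Fin n)) (v : EuclideanSpace ℝ (Fin n)) : ℝ)) ^ p ∂μ)
    (hMdef : ∀ u, hM u ^ p = cτ * ∫ v,
      (|(inner ℝ (u : EuclideanSpace ℝ (Fin n)) (v : EuclideanSpace ℝ (Fin n)) : ℝ)| +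
        τ * (inner ℝ (u : EuclideanSpace ℝ (Fin n)) (v : EuclideanSpace ℝ (Fin n)) : ℝ)) ^ p *
        ρL v ^ ((n : ℝ) + p) ∂(sphereMeasure n)) :
    ((1 : ℝ) / n) * ∫ u, hM u ^ p ∂μ =
      ((1 : ℝ) / n) * ∫ u, ρL u ^ ((n : ℝ) + p) * ((hPi u)⁻¹) ^ (-p) ∂(sphereMeasure n) :=
  stmt15_general n p τ cτ hp μ ρL hρc hPi hM hPipos hPidef hMdef

end
end
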